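/- For the plane-fronted metric, the Ricci tensor satisfies Σ_δ R_{βδ} k^δ = 0 for all β at every point of ℝ^n if and only if Σ_{β,δ} (∂_β∂_δ h) k^β k^δ = 0 at every point, i.e. if and only if ∂_0∂_0 h = 0 identically. -/

import Mathlib

noncomputable section

/-- Partial derivative of a function on `ℝ^n` in the `μ`-th coordinate direction. -/
def pd {n : ℕ} (μ : Fin n) (f : (Fin n → ℝ) → ℝ) : (Fin n → ℝ) → ℝ :=
  fun p => fderiv ℝ f p (Pi.single μ 1)

/-- Embedding of a transverse index `a ∈ {0,…,m-1}` as the coordinate index `a+2`. -/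
def tIdx {m : ℕ} (a : Fin m) : Fin (m + 2) := a.succ.succ

/-- Covariant components `g_{αβ}` of the plane-fronted metric. -/
def gLow (m : ℕ) (η : Matrix (Fin m) (Fin m) ℝ) (h : (Fin (m + 2) → ℝ) → ℝ)
    (p : Fin (m + 2) → ℝ) (α β : Fin (m + 2)) : ℝ :=
  (if (α = 0 ∧ β = 1) ∨ (α = 1 ∧ β = 0) then 1 else 0)
    + (if α = 1 ∧ β = 1 then 2 * h p else 0)
    + ∑ a : Fin m, ∑ b : Fin m, if α = tIdx a ∧ β = tIdx b then η a b else 0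

/-- Contravariant components `g^{αβ}` of the plane-fronted metric. -/
def gUp (m : ℕ) (ηinv : Matrix (Fin m) (Fin m) ℝ) (h : (Fin (m + 2) → ℝ) → ℝ)
    (p : Fin (m + 2) → ℝ) (α β : Fin (m + 2)) : ℝ :=
  (if (α = 0 ∧ β = 1) ∨ (α = 1 ∧ β = 0) then 1 else 0)
    + (if α = 0 ∧ β = 0 then -(2 * h p) else 0)
    + ∑ a : Fin m, ∑ b : Fin m, if α = tIdx a ∧ β = tIdx b then ηinv a b else 0

/-- Christoffel symbols `Γ^α_{βγ}` of the plane-fronted metric. -/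
def chr (m : ℕ) (η ηinv : Matrix (Fin m) (Fin m) ℝ) (h : (Fin (m + 2) → ℝ) → ℝ)
    (p : Fin (m + 2) → ℝ) (α β γ : Fin (m + 2)) : ℝ :=
  (1 / 2) * ∑ δ : Fin (m + 2), gUp m ηinv h p α δ *
    (pd β (fun q => gLow m η h q δ γ) p + pd γ (fun q => gLow m η h q δ β) p
      - pd δ (fun q => gLow m η h q β γ) p)

/-- Riemann curvature tensor `R^α_{βγδ}` of the plane-fronted metric. -/
def riem (m : ℕ) (η ηinv : Matrix (Fin m) (Fin m) ℝ) (h : (Fin (m + 2) → ℝ) → ℝ)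
    (p : Fin (m + 2) → ℝ) (α β γ δ : Fin (m + 2)) : ℝ :=
  pd γ (fun q => chr m η ηinv h q α δ β) p - pd δ (fun q => chr m η ηinv h q α γ β) p
    + ∑ ε : Fin (m + 2), (chr m η ηinv h p α γ ε * chr m η ηinv h p ε δ β
      - chr m η ηinv h p α δ ε * chr m η ηinv h p ε γ β)

/-- Ricci tensor `R_{βδ}` of the plane-fronted metric. -/
def ricci (m : ℕ) (η ηinv : Matrix (Fin m) (Fin m) ℝ) (h : (Fin (m + 2) → ℝ) → ℝ)
    (p : Fin (m + 2) → ℝ) (β δ : Fin (m + 2)) : ℝ :=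
  ∑ α : Fin (m + 2), riem m η ηinv h p α β α δ

/-- Contravariant components `k^α = δ^α_0` of the null vector `k`. -/
def kUp {m : ℕ} (α : Fin (m + 2)) : ℝ := if α = 0 then 1 else 0

/-- Covariant components `k_α = δ^1_α` of the null vector `k`. -/
def kDown {m : ℕ} (α : Fin (m + 2)) : ℝ := if α = 1 then 1 else 0

/-- Covariant derivative `D_α k_β = −Σ_γ Γ^γ_{αβ} k_γ` of the constant-component
null covector `k`. -/
def covDk (m : ℕ) (η ηinv : Matrix (Fin m) (Fin m) ℝ) (h : (Fin (m + 2) → ℝ) → ℝ)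
    (p : Fin (m + 2) → ℝ) (α β : Fin (m + 2)) : ℝ :=
  - ∑ γ : Fin (m + 2), chr m η ηinv h p γ α β * kDown γ

lemma tIdx_ne_one {m : ℕ} (a : Fin m) : tIdx a ≠ 1 := by
  intro hb
  rw [tIdx, ← Fin.succ_zero_eq_one, Fin.succ_inj] at hb
  exact Fin.succ_ne_zero a hb
lemma tIdx_ne_zero {m : ℕ} (a : Fin m) : tIdx a ≠ 0 := Fin.succ_ne_zero _
lemma fin_cases3 {m : ℕ} (α : Fin (m+2)) : α = 0 ∨ α = 1 ∨ ∃ a : Fin m, α = tIdx a := by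
  refine Fin.cases (Or.inl rfl) (fun i => ?_) α
  refine Fin.cases (Or.inr (Or.inl ?_)) (fun a => Or.inr (Or.inr ⟨a, rfl⟩)) i
  exact Fin.succ_zero_eq_one
lemma pd_const' {n : ℕ} (μ : Fin n) (c : ℝ) (p : Fin n → ℝ) : pd μ (fun _ => c) p = 0 := by
  simp [pd]
lemma pd_neg {n : ℕ} (μ : Fin n) (f : (Fin n → ℝ) → ℝ) (p : Fin n → ℝ) :
    pd μ (fun q => -(f q)) p = -(pd μ f p) := by
  simp [pd, fderiv_neg]
lemma gUp_col1 {m : ℕ} (ηinv : Matrix (Fin m) (Fin m) ℝ) (h : (Fin (m + 2) → ℝ) → ℝ)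
    (p : Fin (m+2) → ℝ) (α : Fin (m+2)) :
    gUp m ηinv h p α 1 = if α = 0 then 1 else 0 := by
  have h1 : ∀ b : Fin m, ¬ ((1 : Fin (m+2)) = tIdx b) := fun b hb => tIdx_ne_one b hb.symm
  simp [gUp, h1, Fin.zero_ne_one, (Fin.zero_ne_one (n := m)).symm]
lemma pd_gLow {m : ℕ} (η : Matrix (Fin m) (Fin m) ℝ) (h : (Fin (m + 2) → ℝ) → ℝ)
    (hh : Differentiable ℝ h) (β δ γ : Fin (m+2)) (p : Fin (m+2) → ℝ) :
    pd β (fun q => gLow m η h q δ γ) p = if δ = 1 ∧ γ = 1 then 2 * pd β h p else 0 := by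
  by_cases hc : δ = 1 ∧ γ = 1
  · have hfun : (fun q => gLow m η h q δ γ)
        = fun q => ((if (δ = 0 ∧ γ = 1) ∨ (δ = 1 ∧ γ = 0) then (1:ℝ) else 0) + 2 * h q)
          + ∑ a : Fin m, ∑ b : Fin m, if δ = tIdx a ∧ γ = tIdx b then η a b else 0 := by
      funext q; simp [gLow, hc]
    rw [hfun, if_pos hc]
    simp only [pd, fderiv_add_const, fderiv_const_add]
    rw [fderiv_const_mul (hh p)]
    simp
  · have hfun : (fun q => gLow m η h q δ γ)
        = fun _ => ((if (δ = 0 ∧ γ = 1) ∨ (δ = 1 ∧ γ = 0) then (1:ℝ) else 0))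
          + ∑ a : Fin m, ∑ b : Fin m, if δ = tIdx a ∧ γ = tIdx b then η a b else 0 := by
      funext q; simp [gLow, hc]
    rw [hfun, if_neg hc]
    simp [pd]
lemma chr_eq {m : ℕ} (η ηinv : Matrix (Fin m) (Fin m) ℝ) (h : (Fin (m + 2) → ℝ) → ℝ)
    (hh : Differentiable ℝ h) (p : Fin (m+2) → ℝ) (α β γ : Fin (m+2)) :
    chr m η ηinv h p α β γ =
      (if α = 0 then ((if γ = 1 then pd β h p else 0) + (if β = 1 then pd γ h p else 0)) else 0)
        - (if β = 1 ∧ γ = 1 then ∑ δ : Fin (m+2), gUp m ηinv h p α δ * pd δ h p else 0) := by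
  unfold chr
  simp only [pd_gLow η h hh]
  by_cases hβ : β = 1 <;> by_cases hγ : γ = 1 <;>
    simp [hβ, hγ, mul_add, mul_sub, mul_ite, ite_mul, mul_zero, zero_mul,
      Finset.sum_add_distrib, Finset.sum_sub_distrib, Finset.sum_ite_eq', gUp_col1,
      Finset.mul_sum] <;>
    by_cases hα : α = 0 <;> simp [hα] <;> ring_nf <;>
    first
      | rfl
      | (rw [Finset.mul_sum]; apply Finset.sum_congr rfl; intro i _; ring)
      | skip

variable {m : ℕ} (η ηinv : Matrix (Fin m) (Fin m) ℝ) (h : (Fin (m + 2) → ℝ) → ℝ)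
lemma chr_mid0 (hh : Differentiable ℝ h) (p : Fin (m+2) → ℝ) (α γ : Fin (m+2)) :
    chr m η ηinv h p α 0 γ = if α = 0 ∧ γ = 1 then pd 0 h p else 0 := by
  rw [chr_eq η ηinv h hh]
  simp [Fin.zero_ne_one, ite_and]
lemma chr_last0 (hh : Differentiable ℝ h) (p : Fin (m+2) → ℝ) (α β : Fin (m+2)) :
    chr m η ηinv h p α β 0 = if α = 0 ∧ β = 1 then pd 0 h p else 0 := by
  rw [chr_eq η ηinv h hh]
  simp [Fin.zero_ne_one, ite_and]
lemma quad (hh : Differentiable ℝ h) (p : Fin (m+2) → ℝ) (α β : Fin (m+2)) :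
    ∑ ε : Fin (m+2), (chr m η ηinv h p α α ε * chr m η ηinv h p ε 0 β
      - chr m η ηinv h p α 0 ε * chr m η ηinv h p ε α β) = 0 := by
  have h1 : ∀ ε : Fin (m+2), chr m η ηinv h p ε 0 β = if ε = 0 ∧ β = 1 then pd 0 h p else 0 :=
    fun ε => chr_mid0 η ηinv h hh p ε β
  have h2 : ∀ ε : Fin (m+2), chr m η ηinv h p α 0 ε = if α = 0 ∧ ε = 1 then pd 0 h p else 0 :=
    fun ε => chr_mid0 η ηinv h hh p α ε
  simp only [h1, h2, Finset.sum_sub_distrib]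
  rw [sub_eq_zero]
  by_cases hβ : β = 1 <;> by_cases hα : α = 0 <;>
    simp [hβ, hα, ite_and, mul_ite, ite_mul, mul_zero, zero_mul, Finset.sum_ite_eq,
      Finset.sum_ite_eq', chr_last0 η ηinv h hh, chr_mid0 η ηinv h hh, Fin.zero_ne_one,
      (Fin.zero_ne_one (n := m)).symm]
lemma L1 (hh : Differentiable ℝ h) (p : Fin (m+2) → ℝ) (α β : Fin (m+2)) :
    pd α (fun q => chr m η ηinv h q α 0 β) p
      = if α = 0 ∧ β = 1 then pd 0 (pd 0 h) p else 0 := by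
  have hfun : (fun q => chr m η ηinv h q α 0 β)
      = fun q => if α = 0 ∧ β = 1 then pd 0 h q else 0 := by
    funext q; exact chr_mid0 η ηinv h hh q α β
  rw [hfun]
  by_cases hc : α = 0 ∧ β = 1
  · simp only [hc, if_true, and_self, hc.1]
  · simp only [hc, if_false]
    exact pd_const' α 0 p
lemma L2 (hh : Differentiable ℝ h) (p : Fin (m+2) → ℝ) (α β : Fin (m+2)) :
    pd 0 (fun q => chr m η ηinv h q α α β) p
      = (if α = 0 ∧ β = 1 then pd 0 (pd 0 h) p else 0)
        - (if α = 1 ∧ β = 1 then pd 0 (pd 0 h) p else 0) := by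
  rcases fin_cases3 α with hα | hα | ⟨a, hα⟩
  · subst hα
    have hfun : (fun q => chr m η ηinv h q 0 0 β)
        = fun q => if β = 1 then pd 0 h q else 0 := by
      funext q
      rw [chr_eq η ηinv h hh]
      simp [Fin.zero_ne_one, ite_and]
    rw [hfun]
    simp only [Fin.zero_ne_one, false_and, if_false, sub_zero, true_and]
    by_cases hβ : β = 1
    · simp only [hβ, if_true]
    · simp only [hβ, if_false]; exact pd_const' 0 0 p
  · subst hα
    have hfun : (fun q => chr m η ηinv h q 1 1 β)
        = fun q => -(if β = 1 then pd 0 h q else 0) := by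
      funext q
      rw [chr_eq η ηinv h hh]
      have hrow : ∀ δ : Fin (m+2), gUp m ηinv h q 1 δ = if δ = 0 then 1 else 0 := by
        intro δ
        have h1 : ∀ b : Fin m, ¬ ((1 : Fin (m+2)) = tIdx b) := fun b hb => tIdx_ne_one b hb.symm
        simp [gUp, h1, (Fin.zero_ne_one (n := m)).symm]
      simp [hrow, ite_mul, zero_mul, Finset.sum_ite_eq, (Fin.zero_ne_one (n := m)).symm]
    rw [hfun]
    simp only [(Fin.zero_ne_one (n := m)).symm, false_and, if_false, zero_sub, true_and]
    by_cases hβ : β = 1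
    · simp only [hβ, if_true]
      exact pd_neg 0 (pd 0 h) p
    · simp only [hβ, if_false, neg_zero]
      exact pd_const' 0 0 p
  · subst hα
    have hfun : (fun q => chr m η ηinv h q (tIdx a) (tIdx a) β)
        = fun _ => (0:ℝ) := by
      funext q
      rw [chr_eq η ηinv h hh]
      simp [tIdx_ne_zero a, tIdx_ne_one a]
    rw [hfun, pd_const' 0 0 p]
    simp [tIdx_ne_zero a, tIdx_ne_one a]
lemma ricci_k (hh : Differentiable ℝ h) (p : Fin (m+2) → ℝ) (β : Fin (m+2)) :
    ricci m η ηinv h p β 0 = if β = 1 then pd 0 (pd 0 h) p else 0 := by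
  unfold ricci riem
  simp only [L1 η ηinv h hh p, L2 η ηinv h hh p, quad η ηinv h hh p, add_zero]
  have : ∀ α : Fin (m+2),
      (if α = 0 ∧ β = 1 then pd 0 (pd 0 h) p else 0)
        - ((if α = 0 ∧ β = 1 then pd 0 (pd 0 h) p else 0)
          - (if α = 1 ∧ β = 1 then pd 0 (pd 0 h) p else 0))
      = (if α = 1 ∧ β = 1 then pd 0 (pd 0 h) p else 0) := fun α => by ring
  simp only [this, ite_and]
  simp [Finset.sum_ite_eq']

/-- `Σ_δ R_{βδ} k^δ = 0` everywhere iff `Σ_{β,δ} (∂_β∂_δ h) k^β k^δ = 0`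
everywhere, i.e. iff `∂_0∂_0 h = 0` identically. -/
theorem stmt7 (m : ℕ) (hm : 1 ≤ m) (η ηinv : Matrix (Fin m) (Fin m) ℝ)
    (hηsymm : η.IsSymm) (hη : η * ηinv = 1) (hη' : ηinv * η = 1)
    (h : (Fin (m + 2) → ℝ) → ℝ) (hh : ContDiff ℝ (⊤ : ℕ∞) h) :
    ((∀ (p : Fin (m + 2) → ℝ) (β : Fin (m + 2)),
        ∑ δ : Fin (m + 2), ricci m η ηinv h p β δ * kUp δ = 0)
      ↔ (∀ p : Fin (m + 2) → ℝ,
          ∑ β : Fin (m + 2), ∑ δ : Fin (m + 2),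
            pd β (pd δ h) p * kUp β * kUp δ = 0))
    ∧ ((∀ p : Fin (m + 2) → ℝ,
          ∑ β : Fin (m + 2), ∑ δ : Fin (m + 2),
            pd β (pd δ h) p * kUp β * kUp δ = 0)
      ↔ (∀ p : Fin (m + 2) → ℝ,
          pd (0 : Fin (m + 2)) (pd (0 : Fin (m + 2)) h) p = 0)) := by
  have hd : Differentiable ℝ h := hh.differentiable (by simp)
  have hsum : ∀ p : Fin (m+2) → ℝ,
      (∑ β : Fin (m + 2), ∑ δ : Fin (m + 2), pd β (pd δ h) p * kUp β * kUp δ)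
        = pd 0 (pd 0 h) p := by
    intro p
    simp [kUp, mul_ite, ite_mul, mul_one, mul_zero, zero_mul, Finset.sum_ite_eq']
  have hlhs : ∀ (p : Fin (m+2) → ℝ) (β : Fin (m+2)),
      (∑ δ : Fin (m + 2), ricci m η ηinv h p β δ * kUp δ)
        = if β = 1 then pd 0 (pd 0 h) p else 0 := by
    intro p β
    rw [show (∑ δ : Fin (m + 2), ricci m η ηinv h p β δ * kUp δ) = ricci m η ηinv h p β 0 by
      simp [kUp, mul_ite, mul_one, mul_zero, Finset.sum_ite_eq']]
    exact ricci_k η ηinv h hd p β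
  constructor
  · constructor
    · intro H p
      rw [hsum]
      have := H p 1
      rw [hlhs] at this
      simpa using this
    · intro H p β
      rw [hlhs]
      have := H p
      rw [hsum] at this
      simp [this]
  · constructor
    · intro H p
      have := H p
      rw [hsum] at this
      exact this
    · intro H p
      rw [hsum]
      exact H p
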